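/- arXiv:1805.06364 — 3 statements merged into one kernel-verified Lean document; each statement's English description precedes it below -/
import Mathlib

section
/- (Variance bound for the quadratic remainder term.) Let ε_1,…,ε_n be independent real random variables with common distribution function F, and let b_i, c_i ∈ ℝ for i = 1,…,n. Define T = Σ_{i=1}^n ∫_0^{c_i} (1_{ε_i ≤ v + b_i} − 1_{ε_i ≤ b_i}) dv (oriented integrals). Then Var[T] ≤ 4 (max_{1≤i≤n} |c_i|) · Σ_{i=1}^n ∫_0^{c_i} (F(v + b_i) − F(b_i)) dv = 4 (max_{1≤i≤n} |c_i|) · E[T]. -/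
open MeasureTheory ProbabilityTheory

/-!
The `i`-th summand is `φ_i(ε_i)` with `φ_i(e) = ∫_0^{c_i} (1_{e ≤ v + b_i} - 1_{e ≤ b_i}) dv`.
Its integrand has the sign of `v`, so `0 ≤ φ_i ≤ |c_i|`, whence
`Var[φ_i(ε_i)] ≤ E[φ_i(ε_i)²] ≤ |c_i| E[φ_i(ε_i)]`. The summands are independent, so their
variances add, and Fubini gives `E[φ_i(ε_i)] = ∫_0^{c_i} (F(v + b_i) - F(b_i)) dv`.
-/

noncomputable def stepIncrement (b e v : ℝ) : ℝ :=
  (if e ≤ v + b then 1 else 0) - (if e ≤ b then 1 else 0)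

lemma measurable_stepIncrement (b : ℝ) :
    Measurable fun p : ℝ × ℝ => stepIncrement b p.1 p.2 :=
  (Measurable.ite (measurableSet_le measurable_fst (measurable_snd.add_const _))
    measurable_const measurable_const).sub
  (Measurable.ite (measurableSet_le measurable_fst measurable_const)
    measurable_const measurable_const)

lemma abs_stepIncrement_le_one (b e v : ℝ) : |stepIncrement b e v| ≤ 1 := by
  unfold stepIncrement
  split_ifs <;> norm_num

noncomputable def remainderSummand (b c e : ℝ) : ℝ :=
  ∫ v in (0 : ℝ)..c, stepIncrement b e v

lemma measurable_remainderSummand (b c : ℝ) : Measurable (remainderSummand b c) := by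
  change Measurable fun e => ∫ v in (0 : ℝ)..c, stepIncrement b e v
  simp_rw [intervalIntegral.intervalIntegral_eq_integral_uIoc, smul_eq_mul]
  exact (measurable_stepIncrement b).stronglyMeasurable.integral_prod_right'.measurable.const_mul _

lemma remainderSummand_nonneg (b c e : ℝ) : 0 ≤ remainderSummand b c e := by
  rcases le_total 0 c with hc | hc
  · refine intervalIntegral.integral_nonneg hc fun v hv => ?_
    have : e ≤ b → e ≤ v + b := fun h => by linarith [hv.1]
    unfold stepIncrement
    split_ifs <;> simp_all
  · rw [remainderSummand, intervalIntegral.integral_of_ge hc, neg_nonneg]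
    refine setIntegral_nonpos measurableSet_Ioc fun v hv => ?_
    have : e ≤ v + b → e ≤ b := fun h => by linarith [hv.2]
    unfold stepIncrement
    split_ifs <;> simp_all

lemma remainderSummand_le_abs (b c e : ℝ) : remainderSummand b c e ≤ |c| := by
  have h := intervalIntegral.norm_integral_le_of_norm_le_const (a := 0) (b := c)
    (f := stepIncrement b e) fun v _ => abs_stepIncrement_le_one b e v
  rw [one_mul, sub_zero] at h
  exact (le_abs_self _).trans h

lemma abs_remainderSummand_le (b c e : ℝ) : |remainderSummand b c e| ≤ |c| := by
  rw [abs_of_nonneg (remainderSummand_nonneg b c e)]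
  exact remainderSummand_le_abs b c e

section

variable {Ω : Type*} [MeasurableSpace Ω] {P : Measure Ω} {X : Ω → ℝ}

lemma integral_ite_le_eq_measureReal (hX : Measurable X) (t : ℝ) :
    ∫ ω, (if X ω ≤ t then (1 : ℝ) else 0) ∂P = P.real {ω | X ω ≤ t} := by
  rw [← integral_indicator_one (measurableSet_le hX measurable_const)]
  rfl

lemma integral_remainderSummand_comp [IsFiniteMeasure P] (hX : Measurable X) (b c : ℝ) :
    ∫ ω, remainderSummand b c (X ω) ∂P =
      ∫ v in (0 : ℝ)..c, (P.real {ω | X ω ≤ v + b} - P.real {ω | X ω ≤ b}) := by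
  have hint : Integrable (Function.uncurry fun v ω => stepIncrement b (X ω) v)
      ((volume.restrict (Set.uIoc 0 c)).prod P) := by
    have : IsFiniteMeasure (volume.restrict (Set.uIoc (0 : ℝ) c)) := by
      rw [Set.uIoc]; infer_instance
    refine Integrable.of_bound ?_ 1 (ae_of_all _ fun p => abs_stepIncrement_le_one b _ _)
    exact ((measurable_stepIncrement b).comp
      ((hX.comp measurable_snd).prodMk measurable_fst)).aestronglyMeasurable
  simp_rw [remainderSummand]
  rw [← intervalIntegral_integral_swap hint]
  refine intervalIntegral.integral_congr fun v _ => ?_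
  have hi : ∀ t, Integrable (fun ω => if X ω ≤ t then (1 : ℝ) else 0) P := fun t =>
    (integrable_const 1).indicator (measurableSet_le hX measurable_const)
  unfold stepIncrement
  rw [integral_sub (hi _) (hi _), integral_ite_le_eq_measureReal hX,
    integral_ite_le_eq_measureReal hX]

lemma variance_le_mul_integral_of_nonneg_of_le [IsProbabilityMeasure P] {M : ℝ}
    (hX : AEStronglyMeasurable X P) (h0 : ∀ᵐ ω ∂P, 0 ≤ X ω) (hM : ∀ᵐ ω ∂P, X ω ≤ M) :
    variance X P ≤ M * P[X] := by
  have hL2 : MemLp X 2 P := MemLp.of_bound hX M <| by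
    filter_upwards [h0, hM] with ω h0 hM
    rwa [Real.norm_of_nonneg h0]
  calc variance X P ≤ P[X ^ 2] := variance_le_expectation_sq hX
    _ ≤ P[fun ω => M * X ω] := by
      refine integral_mono_ae hL2.integrable_sq ((hL2.integrable one_le_two).const_mul M) ?_
      filter_upwards [h0, hM] with ω h0 hM
      rw [Pi.pow_apply, sq]
      exact mul_le_mul_of_nonneg_right hM h0
    _ = M * P[X] := integral_const_mul M _

lemma memLp_remainderSummand_comp [IsFiniteMeasure P] (hX : Measurable X) (b c : ℝ)
    (p : ENNReal) : MemLp (fun ω => remainderSummand b c (X ω)) p P :=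
  MemLp.of_bound ((measurable_remainderSummand b c).comp hX).aestronglyMeasurable |c|
    (ae_of_all _ fun _ => abs_remainderSummand_le ..)

lemma variance_remainderSummand_comp_le [IsProbabilityMeasure P] (hX : Measurable X)
    (b c : ℝ) :
    variance (fun ω => remainderSummand b c (X ω)) P ≤
      |c| * ∫ ω, remainderSummand b c (X ω) ∂P :=
  variance_le_mul_integral_of_nonneg_of_le
    ((measurable_remainderSummand b c).comp hX).aestronglyMeasurable
    (ae_of_all _ fun _ => remainderSummand_nonneg ..)
    (ae_of_all _ fun _ => remainderSummand_le_abs ..)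

end

/-- Variance bound for the quadratic remainder term: for independent `ε_1,…,ε_n` with common
distribution function `F` and reals `b_i, c_i`, the sum
`T = Σ_i ∫_0^{c_i} (1_{ε_i ≤ v+b_i} − 1_{ε_i ≤ b_i}) dv` satisfies
`Var[T] ≤ 4 (max_i |c_i|) Σ_i ∫_0^{c_i} (F(v+b_i) − F(b_i)) dv = 4 (max_i |c_i|) E[T]`. -/
theorem variance_quadratic_remainder {Ω : Type*} [MeasurableSpace Ω]
    (P : Measure Ω) [IsProbabilityMeasure P]
    (n : ℕ) (hn : 0 < n)
    (ε : Fin n → Ω → ℝ) (hε : ∀ i, Measurable (ε i))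
    (hindep : iIndepFun ε P)
    (F : ℝ → ℝ) (hF : ∀ i t, (P {ω | ε i ω ≤ t}).toReal = F t)
    (b c : Fin n → ℝ) :
    variance (fun ω => ∑ i, ∫ v in (0 : ℝ)..(c i),
        ((if ε i ω ≤ v + b i then (1 : ℝ) else 0) - (if ε i ω ≤ b i then 1 else 0))) P
      ≤ 4 * (Finset.univ.sup' ⟨⟨0, hn⟩, Finset.mem_univ _⟩ fun i => |c i|)
          * ∑ i, ∫ v in (0 : ℝ)..(c i), (F (v + b i) - F (b i)) ∧
    (∫ ω, (∑ i, ∫ v in (0 : ℝ)..(c i),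
        ((if ε i ω ≤ v + b i then (1 : ℝ) else 0) - (if ε i ω ≤ b i then 1 else 0))) ∂P)
      = ∑ i, ∫ v in (0 : ℝ)..(c i), (F (v + b i) - F (b i)) := by
  set M := Finset.univ.sup' ⟨⟨0, hn⟩, Finset.mem_univ _⟩ fun i => |c i|
  set X : Fin n → Ω → ℝ := fun i ω => remainderSummand (b i) (c i) (ε i ω)
  have hM : ∀ i, |c i| ≤ M := fun i => Finset.le_sup' (fun i => |c i|) (Finset.mem_univ i)
  have hmean : ∀ i, P[X i] = ∫ v in (0 : ℝ)..(c i), (F (v + b i) - F (b i)) := fun i => by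
    simpa only [measureReal_def, hF] using
      integral_remainderSummand_comp (P := P) (hε i) (b i) (c i)
  have hmean_nonneg : ∀ i, 0 ≤ P[X i] := fun i =>
    integral_nonneg fun _ => remainderSummand_nonneg ..
  have hindepX : iIndepFun X P :=
    hindep.comp (fun i => remainderSummand (b i) (c i)) fun i => measurable_remainderSummand _ _
  show variance (fun ω => ∑ i, X i ω) P ≤ _ ∧ ∫ ω, ∑ i, X i ω ∂P = _
  refine ⟨?_, ?_⟩
  · rw [← Finset.sum_fn,
      IndepFun.variance_sum (fun i _ => memLp_remainderSummand_comp (hε i) _ _ 2)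
        fun i _ j _ hij => hindepX.indepFun hij]
    calc ∑ i, variance (X i) P ≤ ∑ i, M * P[X i] := Finset.sum_le_sum fun i _ =>
          (variance_remainderSummand_comp_le (hε i) _ _).trans <|
            mul_le_mul_of_nonneg_right (hM i) (hmean_nonneg i)
      _ = M * ∑ i, P[X i] := (Finset.mul_sum ..).symm
      _ ≤ 4 * M * ∑ i, P[X i] := by
        have := mul_nonneg ((abs_nonneg _).trans (hM ⟨0, hn⟩))
          (Finset.sum_nonneg fun i (_ : i ∈ Finset.univ) => hmean_nonneg i)
        linarith
      _ = _ := by simp_rw [hmean]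
  · rw [integral_finsetSum _ fun i _ =>
      (memLp_remainderSummand_comp (hε i) _ _ 1).integrable le_rfl]
    exact Finset.sum_congr rfl fun i _ => hmean i
end

section
/- (Limit of the mean of B_n.) Let F : ℝ → [0,1] be a distribution function that is differentiable in a neighbourhood of 0 with continuous density f having bounded derivative near 0. Let 𝕏_1,…,𝕏_n ∈ ℝ^r be deterministic vectors (a triangular array indexed by n) such that n^{−1} max_{1≤i≤n} 𝕏_iᵗ𝕏_i → 0 and n^{−1} Σ_{i=1}^n 𝕏_i 𝕏_iᵗ → Υ, a positive definite r × r matrix. Fix u ∈ ℝ^r, and define E_n = Σ_{i=1}^n ∫_0^{n^{−1/2} 𝕏_iᵗ u} (F(v) − F(0)) dv (oriented integrals). Then E_n → (1/2) f(0) uᵗ Υ u as n → ∞. -/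
open Filter


lemma mean_Bn_taylor (F f f' : ℝ → ℝ) (δ M : ℝ) (hδ : 0 < δ)
    (hFmono : Monotone F)
    (hdens : ∀ x ∈ Set.Ioo (-δ) δ, HasDerivAt F (f x) x)
    (hfcont : ContinuousOn f (Set.Ioo (-δ) δ))
    (hf' : ∀ x ∈ Set.Ioo (-δ) δ, HasDerivAt f (f' x) x ∧ |f' x| ≤ M)
    (a : ℝ) (ha : |a| < δ) :
    |(∫ v in (0:ℝ)..a, (F v - F 0)) - f 0 * a ^ 2 / 2| ≤ M * |a| ^ 3 := by
  have hM : 0 ≤ M := le_trans (abs_nonneg _) (hf' 0 ⟨by linarith, hδ⟩).2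
  have habs := abs_lt.mp ha
  have hsub : Set.uIcc 0 a ⊆ Set.Ioo (-δ) δ := by
    intro x hx
    rw [Set.mem_uIcc] at hx
    rcases hx with ⟨h1, h2⟩ | ⟨h1, h2⟩ <;> exact ⟨by linarith, by linarith⟩
  -- Lipschitz bound for f
  have hlip : ∀ x ∈ Set.Ioo (-δ) δ, |f x - f 0| ≤ M * |x| := by
    intro x hx
    have := (convex_Ioo (-δ) δ).norm_image_sub_le_of_norm_hasDerivWithin_le
      (f' := f') (fun y hy => ((hf' y hy).1).hasDerivWithinAt)
      (fun y hy => (hf' y hy).2) ⟨by linarith, hδ⟩ hx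
    simpa using this
  -- FTC
  have hFv : ∀ v ∈ Set.uIcc 0 a, F v - F 0 = ∫ x in (0:ℝ)..v, f x := by
    intro v hv
    have hsub2 : Set.uIcc 0 v ⊆ Set.uIcc 0 a :=
      Set.uIcc_subset_uIcc Set.left_mem_uIcc hv
    rw [intervalIntegral.integral_eq_sub_of_hasDerivAt
      (fun x hx => hdens x (hsub (hsub2 hx)))
      ((hfcont.mono (hsub2.trans hsub)).intervalIntegrable)]
  -- bound on the remainder
  have hbound : ∀ v ∈ Set.uIoc 0 a, ‖F v - F 0 - f 0 * v‖ ≤ M * |a| * |a| := by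
    intro v hv
    have hv' : v ∈ Set.uIcc 0 a := Set.uIoc_subset_uIcc hv
    have hva : |v| ≤ |a| := by
      rw [Set.mem_uIcc] at hv'
      rcases hv' with ⟨h1, h2⟩ | ⟨h1, h2⟩ <;> rw [abs_le] <;>
        constructor <;> cases' (abs_nonneg a).lt_or_eq with h h <;>
        · first
          | linarith [le_abs_self a, neg_abs_le a]
    have hsub2 : Set.uIcc 0 v ⊆ Set.uIcc 0 a :=
      Set.uIcc_subset_uIcc Set.left_mem_uIcc hv'
    have key : F v - F 0 - f 0 * v = ∫ x in (0:ℝ)..v, (f x - f 0) := by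
      rw [intervalIntegral.integral_sub
        ((hfcont.mono (hsub2.trans hsub)).intervalIntegrable)
        intervalIntegrable_const, intervalIntegral.integral_const, hFv v hv']
      simp [smul_eq_mul, mul_comm]
    rw [Real.norm_eq_abs, key]
    calc |∫ x in (0:ℝ)..v, (f x - f 0)| = ‖∫ x in (0:ℝ)..v, (f x - f 0)‖ := (Real.norm_eq_abs _).symm
      _ ≤ M * |a| * |v - 0| := by
          apply intervalIntegral.norm_integral_le_of_norm_le_const
          intro x hx
          have hx' : x ∈ Set.uIcc 0 v := Set.uIoc_subset_uIcc hx
          have hxa : |x| ≤ |v| := by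
            rw [Set.mem_uIcc] at hx'
            rcases hx' with ⟨h1, h2⟩ | ⟨h1, h2⟩ <;> rw [abs_le] <;>
              constructor <;> linarith [le_abs_self v, neg_abs_le v]
          calc ‖f x - f 0‖ ≤ M * |x| := hlip x (hsub (hsub2 hx'))
            _ ≤ M * |a| := by nlinarith
      _ ≤ M * |a| * |a| := by
          rw [sub_zero]
          nlinarith [abs_nonneg a, abs_nonneg v, mul_nonneg hM (abs_nonneg a)]
  -- integrability
  have hInt1 : IntervalIntegrable (fun v => F v - F 0) MeasureTheory.volume 0 a :=
    hFmono.intervalIntegrable.sub intervalIntegrable_const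
  have hInt2 : IntervalIntegrable (fun v => f 0 * v) MeasureTheory.volume 0 a :=
    (continuous_const.mul continuous_id).intervalIntegrable _ _
  have hsplit : (∫ v in (0:ℝ)..a, (F v - F 0))
      = f 0 * a ^ 2 / 2 + ∫ v in (0:ℝ)..a, (F v - F 0 - f 0 * v) := by
    rw [intervalIntegral.integral_sub hInt1 hInt2]
    have : (∫ v in (0:ℝ)..a, f 0 * v) = f 0 * a ^ 2 / 2 := by
      rw [intervalIntegral.integral_const_mul, integral_id]
      ring
    rw [this]; ring
  rw [hsplit]
  have := intervalIntegral.norm_integral_le_of_norm_le_const hbound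
  rw [sub_zero] at this
  calc |f 0 * a ^ 2 / 2 + (∫ v in (0:ℝ)..a, (F v - F 0 - f 0 * v)) - f 0 * a ^ 2 / 2|
      = ‖∫ v in (0:ℝ)..a, (F v - F 0 - f 0 * v)‖ := by
        rw [Real.norm_eq_abs, add_sub_cancel_left]
    _ ≤ M * |a| * |a| * |a| := this
    _ = M * |a| ^ 3 := by ring

/-- Limit of the mean of `B_n`: under the design conditions
`n^{-1} max_i ‖𝕏_i‖² → 0` and `n^{-1} Σ_i 𝕏_i 𝕏_iᵗ → Υ` (positive definite), for a
distribution function `F` differentiable near `0` with continuous density `f` having bounded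
derivative near `0`, one has
`E_n = Σ_i ∫_0^{n^{-1/2}𝕏_iᵗu} (F(v) − F(0)) dv → (1/2) f(0) uᵗΥu`. -/
theorem mean_Bn_limit (r : ℕ)
    (X : ∀ n : ℕ, Fin n → Fin r → ℝ)
    (hmax : ∀ η > (0 : ℝ), ∀ᶠ n : ℕ in atTop, ∀ i : Fin n,
      (n : ℝ)⁻¹ * ∑ k, (X n i k) ^ 2 < η)
    (Υ : Matrix (Fin r) (Fin r) ℝ) (hΥpos : Υ.PosDef)
    (hΥ : ∀ k l, Tendsto (fun n : ℕ => (n : ℝ)⁻¹ * ∑ i, X n i k * X n i l)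
      atTop (nhds (Υ k l)))
    (F f : ℝ → ℝ) (hFmono : Monotone F) (hFrange : ∀ t, F t ∈ Set.Icc (0 : ℝ) 1)
    (δ : ℝ) (hδ : 0 < δ)
    (hdens : ∀ x ∈ Set.Ioo (-δ) δ, HasDerivAt F (f x) x)
    (hfcont : ContinuousOn f (Set.Ioo (-δ) δ))
    (f' : ℝ → ℝ) (M : ℝ)
    (hf' : ∀ x ∈ Set.Ioo (-δ) δ, HasDerivAt f (f' x) x ∧ |f' x| ≤ M)
    (u : Fin r → ℝ) :
    Tendsto
      (fun n : ℕ => ∑ i, ∫ v in (0 : ℝ)..((Real.sqrt n)⁻¹ * ∑ k, X n i k * u k),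
        (F v - F 0))
      atTop (nhds ((1 / 2) * f 0 * ∑ k, ∑ l, u k * Υ k l * u l)) := by
  have hM : 0 ≤ M := le_trans (abs_nonneg _) (hf' 0 ⟨by linarith, hδ⟩).2
  set L : ℝ := ∑ k, ∑ l, u k * Υ k l * u l with hL
  set U : ℝ := ∑ k, (u k) ^ 2 with hU
  have hUnn : 0 ≤ U := Finset.sum_nonneg fun k _ => sq_nonneg _
  -- notation
  set A : ∀ n : ℕ, Fin n → ℝ := fun n i => (Real.sqrt n)⁻¹ * ∑ k, X n i k * u k with hA
  set T : ∀ n : ℕ, Fin n → ℝ :=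
    fun n i => ∫ v in (0 : ℝ)..(A n i), (F v - F 0) with hT
  set S : ℕ → ℝ := fun n => ∑ i, (A n i) ^ 2 with hS
  have hsqrt : ∀ n : ℕ, ((Real.sqrt n)⁻¹) ^ 2 = (n : ℝ)⁻¹ := by
    intro n
    rw [inv_pow, Real.sq_sqrt (Nat.cast_nonneg n)]
  -- S n rewritten as a quadratic form
  have hSeq : ∀ n : ℕ, S n
      = ∑ k, ∑ l, u k * u l * ((n : ℝ)⁻¹ * ∑ i, X n i k * X n i l) := by
    intro n
    calc S n = ∑ i, (n : ℝ)⁻¹ * ∑ k, ∑ l, (X n i k * u k) * (X n i l * u l) := by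
          apply Finset.sum_congr rfl
          intro i _
          rw [hA, mul_pow, hsqrt n, sq, Finset.sum_mul_sum]
      _ = ∑ k, ∑ l, u k * u l * ((n : ℝ)⁻¹ * ∑ i, X n i k * X n i l) := by
          simp_rw [Finset.mul_sum]
          rw [Finset.sum_comm]
          apply Finset.sum_congr rfl
          intro k _
          rw [Finset.sum_comm]
          apply Finset.sum_congr rfl
          intro l _
          apply Finset.sum_congr rfl
          intro i _
          ring
  -- convergence of the quadratic part
  have hStend : Tendsto S atTop (nhds L) := by
    have h1 : Tendsto (fun n : ℕ => ∑ k, ∑ l, u k * u l * ((n : ℝ)⁻¹ * ∑ i, X n i k * X n i l))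
        atTop (nhds (∑ k, ∑ l, u k * u l * Υ k l)) := by
      apply tendsto_finset_sum
      intro k _
      apply tendsto_finset_sum
      intro l _
      exact (hΥ k l).const_mul _
    have h2 : (∑ k, ∑ l, u k * u l * Υ k l) = L := by
      rw [hL]
      apply Finset.sum_congr rfl
      intro k _
      apply Finset.sum_congr rfl
      intro l _
      ring
    rw [← h2]
    have h3 : S = fun n : ℕ => ∑ k, ∑ l, u k * u l * ((n : ℝ)⁻¹ * ∑ i, X n i k * X n i l) :=
      funext hSeq
    rw [h3]
    exact h1
  -- the error term tends to 0
  have herr : Tendsto (fun n : ℕ => (∑ i, T n i) - f 0 / 2 * S n) atTop (nhds 0) := by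
    rw [NormedAddCommGroup.tendsto_nhds_zero]
    intro ε hε
    set C : ℝ := |L| + 1 with hC
    have hCpos : (0:ℝ) < C := by positivity
    set β : ℝ := min δ (ε / ((M + 1) * C)) with hβ
    have hβpos : 0 < β := lt_min hδ (by positivity)
    set η : ℝ := β ^ 2 / (2 * (U + 1)) with hη
    have hηpos : 0 < η := by positivity
    filter_upwards [hmax η hηpos, hStend.eventually_lt_const (show L < C by
      rw [hC]; linarith [le_abs_self L])] with n hn hSn
    -- pointwise bounds on A n i
    have hAsq : ∀ i : Fin n, (A n i) ^ 2 ≤ β ^ 2 / 2 := by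
      intro i
      have hcs : (∑ k, X n i k * u k) ^ 2 ≤ (∑ k, (X n i k) ^ 2) * U :=
        Finset.sum_mul_sq_le_sq_mul_sq _ _ _
      have hnn : (0:ℝ) ≤ (n : ℝ)⁻¹ := by positivity
      have h1 : (A n i) ^ 2 = (n : ℝ)⁻¹ * (∑ k, X n i k * u k) ^ 2 := by
        rw [hA, mul_pow, hsqrt n]
      have h2 : (n : ℝ)⁻¹ * (∑ k, (X n i k) ^ 2) < η := hn i
      have h3 : (0:ℝ) ≤ ∑ k, (X n i k) ^ 2 := Finset.sum_nonneg fun k _ => sq_nonneg _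
      have h4 : (A n i) ^ 2 ≤ ((n : ℝ)⁻¹ * ∑ k, (X n i k) ^ 2) * U := by
        rw [h1, mul_assoc]
        exact mul_le_mul_of_nonneg_left hcs hnn
      have h5 : ((n : ℝ)⁻¹ * ∑ k, (X n i k) ^ 2) * U ≤ η * U :=
        mul_le_mul_of_nonneg_right h2.le hUnn
      have h6 : η * U ≤ β ^ 2 / 2 := by
        rw [hη]
        rw [div_mul_eq_mul_div, div_le_div_iff₀ (by positivity) (by norm_num)]
        nlinarith [sq_nonneg β]
      linarith
    have hAabs : ∀ i : Fin n, |A n i| < β := by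
      intro i
      nlinarith [hAsq i, sq_abs (A n i), abs_nonneg (A n i), hβpos]
    have hAδ : ∀ i : Fin n, |A n i| < δ := fun i =>
      lt_of_lt_of_le (hAabs i) (min_le_left _ _)
    -- assemble
    have hsum : (∑ i, T n i) - f 0 / 2 * S n = ∑ i, (T n i - f 0 * (A n i) ^ 2 / 2) := by
      rw [Finset.sum_sub_distrib]
      congr 1
      rw [hS, Finset.mul_sum]
      apply Finset.sum_congr rfl
      intro i _
      ring
    rw [Real.norm_eq_abs, hsum]
    calc |∑ i, (T n i - f 0 * (A n i) ^ 2 / 2)|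
        ≤ ∑ i, |T n i - f 0 * (A n i) ^ 2 / 2| := Finset.abs_sum_le_sum_abs _ _
      _ ≤ ∑ i, M * β * (A n i) ^ 2 := by
          apply Finset.sum_le_sum
          intro i _
          calc |T n i - f 0 * (A n i) ^ 2 / 2| ≤ M * |A n i| ^ 3 :=
                mean_Bn_taylor F f f' δ M hδ hFmono hdens hfcont hf' (A n i) (hAδ i)
            _ = M * (A n i) ^ 2 * |A n i| := by rw [← sq_abs]; ring
            _ ≤ M * (A n i) ^ 2 * β :=
                mul_le_mul_of_nonneg_left (hAabs i).le (mul_nonneg hM (sq_nonneg _))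
            _ = M * β * (A n i) ^ 2 := by ring
      _ = M * β * S n := by rw [hS, Finset.mul_sum]
      _ < ε := by
          have hβle : β ≤ ε / ((M + 1) * C) := min_le_right _ _
          have h1 : M * β * S n ≤ M * β * C :=
            mul_le_mul_of_nonneg_left hSn.le (mul_nonneg hM hβpos.le)
          have h2 : M * β * C ≤ M * (ε / ((M + 1) * C)) * C := by
            calc M * β * C = (M * C) * β := by ring
              _ ≤ (M * C) * (ε / ((M + 1) * C)) :=
                  mul_le_mul_of_nonneg_left hβle (mul_nonneg hM hCpos.le)
              _ = M * (ε / ((M + 1) * C)) * C := by ring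
          have h3 : M * (ε / ((M + 1) * C)) * C = (M / (M + 1)) * ε := by
            field_simp
          have h4 : (M / (M + 1)) * ε < ε := by
            have h5 : M / (M + 1) < 1 := (div_lt_one (by linarith)).mpr (by linarith)
            have h6 := mul_lt_mul_of_pos_right h5 hε
            rw [one_mul] at h6
            exact h6
          exact lt_of_le_of_lt (h1.trans h2) (h3 ▸ h4)
  -- combine
  have hfinal : Tendsto (fun n : ℕ => ((∑ i, T n i) - f 0 / 2 * S n) + f 0 / 2 * S n)
      atTop (nhds (0 + f 0 / 2 * L)) := herr.add (hStend.const_mul _)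
  have heq : (fun n : ℕ => ((∑ i, T n i) - f 0 / 2 * S n) + f 0 / 2 * S n)
      = fun n : ℕ => ∑ i, T n i := by
    funext n
    ring
  rw [heq] at hfinal
  have : (1 / 2) * f 0 * L = 0 + f 0 / 2 * L := by ring
  rw [this]
  exact hfinal
end

section
/- (Convergence in probability of B_n.) Let ε_1, ε_2, … be i.i.d. real random variables with distribution function F that is differentiable in a neighbourhood of 0 with continuous density f having bounded derivative near 0. Let 𝕏_1,…,𝕏_n ∈ ℝ^r be deterministic vectors (a triangular array indexed by n) such that n^{−1} max_{1≤i≤n} 𝕏_iᵗ𝕏_i → 0 and n^{−1} Σ_{i=1}^n 𝕏_i 𝕏_iᵗ → Υ, a positive definite r × r matrix. Fix u ∈ ℝ^r and define B_n(u) = Σ_{i=1}^n ∫_0^{n^{−1/2} 𝕏_iᵗ u} [1_{ε_i < v} − 1_{ε_i < 0}] dv (oriented integrals). Then B_n(u) converges in probability to (1/2) f(0) uᵗ Υ u as n → ∞. -/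
/-!
The `i`-th summand of `B_n(u)` is `g(a, ε_i)` with `a = n^{-1/2} 𝕏_iᵗu`, where
`g(a, x) = (a - x)(1_{x<a} - 1_{x<0})` lies in `[0, |a|]`. By Fubini,
`E g(a, ε) = ∫_0^a (F v - F 0) dv`, which is `f(0) a² / 2 + O(|a|³)` by a second-order Taylor
expansion of `F` at `0`, and `Var g(a, ε) ≤ |a| E g(a, ε)` since `g² ≤ |a| g`. As
`max_i |a_{n,i}| → 0` and `Σ_i a_{n,i}² → uᵗΥu`, the mean of `B_n(u)` tends to `f(0) uᵗΥu / 2`,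
while by independence its variance is at most `max_i |a_{n,i}|` times its mean, hence tends
to `0`. Chebyshev's inequality concludes.
-/

open MeasureTheory ProbabilityTheory Filter

noncomputable def knightIntegral (a x : ℝ) : ℝ :=
  ∫ v in (0 : ℝ)..a, ((if x < v then (1 : ℝ) else 0) - (if x < 0 then 1 else 0))

lemma intervalIntegral_ite_lt_of_le (x : ℝ) {b c : ℝ} (hbc : b ≤ c) :
    ∫ v in b..c, (if x < v then (1 : ℝ) else 0) = max (c - max x b) 0 := by
  have hind : (fun v => if x < v then (1 : ℝ) else 0) = (Set.Ioi x).indicator 1 := by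
    ext v; simp [Set.indicator_apply]
  have hinter : Set.Ioi x ∩ Set.Ioc b c = Set.Ioc (max x b) c := by
    ext v; simp only [Set.mem_inter_iff, Set.mem_Ioi, Set.mem_Ioc, max_lt_iff]; tauto
  rw [intervalIntegral.integral_of_le hbc, hind, integral_indicator_one measurableSet_Ioi,
    Measure.real, Measure.restrict_apply measurableSet_Ioi, hinter, Real.volume_Ioc,
    ENNReal.toReal_ofReal']

lemma knightIntegral_eq (a x : ℝ) :
    knightIntegral a x = (a - x) * ((if x < a then 1 else 0) - (if x < 0 then 1 else 0)) := by
  have hint : IntervalIntegrable (fun v => if x < v then (1 : ℝ) else 0) volume 0 a :=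
    (Monotone.intervalIntegrable fun v w hvw => by split_ifs <;> grind)
  rw [knightIntegral, intervalIntegral.integral_sub hint intervalIntegrable_const,
    intervalIntegral.integral_const, smul_eq_mul, sub_zero]
  rcases le_total 0 a with ha | ha
  · rw [intervalIntegral_ite_lt_of_le x ha]
    split_ifs <;> simp only [max_def] <;> split_ifs <;> linarith
  · rw [intervalIntegral.integral_symm, intervalIntegral_ite_lt_of_le x ha]
    split_ifs <;> simp only [max_def] <;> split_ifs <;> linarith

lemma knightIntegral_nonneg (a x : ℝ) : 0 ≤ knightIntegral a x := by
  rw [knightIntegral_eq]; split_ifs <;> nlinarith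

lemma knightIntegral_le_abs (a x : ℝ) : knightIntegral a x ≤ |a| := by
  rw [knightIntegral_eq]; split_ifs <;> cases abs_cases a <;> nlinarith

lemma measurable_knightIntegral (a : ℝ) : Measurable (knightIntegral a) := by
  simp_rw [funext (knightIntegral_eq a)]
  exact (measurable_const.sub measurable_id).mul
    ((Measurable.ite measurableSet_Iio measurable_const measurable_const).sub
      (Measurable.ite measurableSet_Iio measurable_const measurable_const))

lemma abs_intervalIntegral_sub_sub_le {F f : ℝ → ℝ} {a K : ℝ}
    (hF : ∀ x ∈ Set.uIcc 0 a, HasDerivAt F (f x) x)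
    (hf : ∀ x ∈ Set.uIcc 0 a, |f x - f 0| ≤ K) :
    |(∫ v in (0 : ℝ)..a, (F v - F 0)) - f 0 * a ^ 2 / 2| ≤ K * a ^ 2 := by
  have hK : 0 ≤ K := by simpa using hf 0 Set.left_mem_uIcc
  have hpt : ∀ v ∈ Set.uIcc 0 a, ‖F v - F 0 - f 0 * v‖ ≤ K * |a| := by
    intro v hv
    have := Convex.norm_image_sub_le_of_norm_hasDerivWithin_le (f := fun w => F w - f 0 * w)
      (fun x hx => ((hF x hx).sub ((hasDerivAt_id x).const_mul (f 0))).hasDerivWithinAt)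
      (fun x hx => by simpa using hf x hx) (convex_uIcc 0 a) Set.left_mem_uIcc hv
    simp only [mul_zero, sub_zero] at this
    calc ‖F v - F 0 - f 0 * v‖ = ‖F v - f 0 * v - F 0‖ := by ring_nf
      _ ≤ K * ‖v‖ := this
      _ ≤ K * |a| := by
        gcongr; simpa using Set.abs_sub_left_of_mem_uIcc hv
  have hcont : ContinuousOn F (Set.uIcc 0 a) := fun x hx =>
    (hF x hx).continuousAt.continuousWithinAt
  have hsplit : (∫ v in (0 : ℝ)..a, (F v - F 0)) - f 0 * a ^ 2 / 2
      = ∫ v in (0 : ℝ)..a, (F v - F 0 - f 0 * v) := by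
    have hi1 : IntervalIntegrable (fun v => F v - F 0) volume 0 a :=
      (hcont.sub continuousOn_const).intervalIntegrable
    have hi2 : IntervalIntegrable (fun v => f 0 * v) volume 0 a :=
      (continuous_const.mul continuous_id).intervalIntegrable 0 a
    rw [intervalIntegral.integral_sub hi1 hi2, intervalIntegral.integral_const_mul, integral_id]
    ring
  rw [hsplit, ← Real.norm_eq_abs]
  calc _ ≤ K * |a| * |a - 0| := intervalIntegral.norm_integral_le_of_norm_le_const
        fun v hv => hpt v (Set.uIoc_subset_uIcc hv)
    _ = K * a ^ 2 := by rw [sub_zero, mul_assoc, ← sq, sq_abs]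

section KnightIntegralOfRandomVariable

variable {Ω : Type*} [MeasurableSpace Ω] (P : Measure Ω) {e : Ω → ℝ}

lemma integral_ite_lt_eq_measureReal [IsFiniteMeasure P] (he : Measurable e) (v : ℝ) :
    ∫ ω, (if e ω < v then (1 : ℝ) else 0) ∂P = P.real {ω | e ω < v} := by
  rw [← integral_indicator_one (measurableSet_lt he measurable_const)]
  rfl

lemma integral_knightIntegral [IsFiniteMeasure P] (he : Measurable e) (a : ℝ) :
    ∫ ω, knightIntegral a (e ω) ∂P
      = ∫ v in (0 : ℝ)..a, (P.real {ω | e ω < v} - P.real {ω | e ω < 0}) := by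
  have hind : ∀ v, Measurable fun ω => if e ω < v then (1 : ℝ) else 0 := fun v =>
    Measurable.ite (measurableSet_lt he measurable_const) measurable_const measurable_const
  have hmeas : Measurable (Function.uncurry fun (v : ℝ) (ω : Ω) =>
      (if e ω < v then (1 : ℝ) else 0) - (if e ω < 0 then 1 else 0)) :=
    (Measurable.ite (measurableSet_lt (he.comp measurable_snd) measurable_fst)
      measurable_const measurable_const).sub ((hind 0).comp measurable_snd)
  have hint : Integrable (Function.uncurry fun (v : ℝ) (ω : Ω) =>
      (if e ω < v then (1 : ℝ) else 0) - (if e ω < 0 then 1 else 0))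
      ((volume.restrict (Set.uIoc 0 a)).prod P) := by
    have : IsFiniteMeasure (volume.restrict (Set.uIoc (0 : ℝ) a)) :=
      Real.isFiniteMeasure_restrict_Ioc _ _
    refine (integrable_const (1 : ℝ)).mono' hmeas.aestronglyMeasurable (ae_of_all _ fun p => ?_)
    simp only [Function.uncurry, Real.norm_eq_abs]
    split_ifs <;> norm_num
  have hbdd : ∀ v, Integrable (fun ω => if e ω < v then (1 : ℝ) else 0) P := fun v =>
    (integrable_const (1 : ℝ)).mono' (hind v).aestronglyMeasurable
      (ae_of_all _ fun ω => by simp only [Real.norm_eq_abs]; split_ifs <;> norm_num)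
  simp only [knightIntegral, ← intervalIntegral_integral_swap hint]
  congr 1 with v
  rw [integral_sub (hbdd v) (hbdd 0), integral_ite_lt_eq_measureReal P he,
    integral_ite_lt_eq_measureReal P he]

lemma measureReal_lt_eq_of_continuousWithinAt [IsFiniteMeasure P] {F : ℝ → ℝ}
    (hF : ∀ t, P.real {ω | e ω ≤ t} = F t) {v : ℝ} (hv : ContinuousWithinAt F (Set.Iio v) v) :
    P.real {ω | e ω < v} = F v := by
  refine le_antisymm (hF v ▸ measureReal_mono (Set.ofPred_subset_ofPred.2 fun ω => le_of_lt)) ?_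
  refine le_of_tendsto hv (eventually_nhdsWithin_of_forall fun w hw => ?_)
  exact hF w ▸ measureReal_mono (Set.ofPred_subset_ofPred.2 fun ω hω => lt_of_le_of_lt hω hw)

lemma memLp_knightIntegral [IsFiniteMeasure P] (he : Measurable e) (a : ℝ) (p : ENNReal) :
    MemLp (fun ω => knightIntegral a (e ω)) p P :=
  MemLp.of_bound ((measurable_knightIntegral a).comp he).aestronglyMeasurable |a|
    (ae_of_all _ fun ω => by
      rw [Real.norm_eq_abs, abs_of_nonneg (knightIntegral_nonneg _ _)]
      exact knightIntegral_le_abs _ _)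

lemma integrable_knightIntegral [IsFiniteMeasure P] (he : Measurable e) (a : ℝ) :
    Integrable (fun ω => knightIntegral a (e ω)) P :=
  memLp_one_iff_integrable.1 (memLp_knightIntegral P he a 1)

lemma variance_knightIntegral_le [IsProbabilityMeasure P] (he : Measurable e) (a : ℝ) :
    variance (fun ω => knightIntegral a (e ω)) P ≤ |a| * ∫ ω, knightIntegral a (e ω) ∂P := by
  rw [← integral_const_mul]
  have hmeas : AEStronglyMeasurable (fun ω => knightIntegral a (e ω)) P :=
    ((measurable_knightIntegral a).comp he).aestronglyMeasurable
  refine (variance_le_expectation_sq hmeas).trans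
    (integral_mono ((memLp_knightIntegral P he a 2).integrable_sq)
      ((integrable_knightIntegral P he a).const_mul _) fun ω => ?_)
  have h0 := knightIntegral_nonneg a (e ω)
  have h1 := knightIntegral_le_abs a (e ω)
  simp only [Pi.pow_apply]
  nlinarith

lemma abs_integral_knightIntegral_sub_le [IsFiniteMeasure P] (he : Measurable e)
    {F f f' : ℝ → ℝ} (hF : ∀ t, P.real {ω | e ω ≤ t} = F t) {δ M a : ℝ}
    (hdens : ∀ x ∈ Set.Ioo (-δ) δ, HasDerivAt F (f x) x)
    (hf' : ∀ x ∈ Set.Ioo (-δ) δ, HasDerivAt f (f' x) x ∧ |f' x| ≤ M) (ha : |a| < δ) :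
    |∫ ω, knightIntegral a (e ω) ∂P - f 0 * a ^ 2 / 2| ≤ M * |a| ^ 3 := by
  have hsub : Set.uIcc 0 a ⊆ Set.Ioo (-δ) δ := fun x hx => by
    have := Set.abs_sub_left_of_mem_uIcc hx
    rw [sub_zero, sub_zero] at this
    exact abs_lt.1 (this.trans_lt ha)
  have hcdf : ∀ v ∈ Set.uIcc 0 a, P.real {ω | e ω < v} = F v := fun v hv =>
    measureReal_lt_eq_of_continuousWithinAt P hF
      (hdens v (hsub hv)).continuousAt.continuousWithinAt
  have hM : 0 ≤ M := (abs_nonneg _).trans (hf' 0 (hsub Set.left_mem_uIcc)).2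
  have hlip : ∀ x ∈ Set.uIcc 0 a, |f x - f 0| ≤ M * |a| := fun x hx => by
    have := Convex.norm_image_sub_le_of_norm_hasDerivWithin_le
      (fun y hy => (hf' y (hsub hy)).1.hasDerivWithinAt) (fun y hy => (hf' y (hsub hy)).2)
      (convex_uIcc 0 a) Set.left_mem_uIcc hx
    simpa using this.trans
      (mul_le_mul_of_nonneg_left (by simpa using Set.abs_sub_left_of_mem_uIcc hx) hM)
  rw [integral_knightIntegral P he,
    intervalIntegral.integral_congr (g := fun v => F v - F 0) fun v hv => by
      simp only [hcdf v hv, hcdf 0 Set.left_mem_uIcc]]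
  calc _ ≤ M * |a| * a ^ 2 :=
        abs_intervalIntegral_sub_sub_le (fun x hx => hdens x (hsub hx)) hlip
    _ = M * |a| ^ 3 := by rw [← sq_abs a]; ring

end KnightIntegralOfRandomVariable

lemma tendstoInMeasure_const_of_tendsto_variance {Ω ι : Type*} [MeasurableSpace Ω]
    {P : Measure Ω} [IsFiniteMeasure P] {l : Filter ι} {Y : ι → Ω → ℝ} {c : ℝ}
    (hY : ∀ i, MemLp (Y i) 2 P) (hmean : Tendsto (fun i => ∫ ω, Y i ω ∂P) l (nhds c))
    (hvar : Tendsto (fun i => variance (Y i) P) l (nhds 0)) :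
    TendstoInMeasure P Y l (fun _ => c) := by
  rw [tendstoInMeasure_iff_dist]
  intro η hη
  have hcheb :
      Tendsto (fun i => ENNReal.ofReal (variance (Y i) P / (η / 2) ^ 2)) l (nhds 0) := by
    simpa using ENNReal.tendsto_ofReal (hvar.div_const ((η / 2) ^ 2))
  refine tendsto_of_tendsto_of_tendsto_of_le_of_le' tendsto_const_nhds hcheb
    (Eventually.of_forall fun _ => zero_le) ?_
  filter_upwards [Metric.tendsto_nhds.1 hmean (η / 2) (half_pos hη)] with i hi
  refine (measure_mono fun ω (hω : η ≤ dist (Y i ω) c) => ?_).trans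
    (meas_ge_le_variance_div_sq (hY i) (half_pos hη))
  rw [Real.dist_eq] at hi hω
  show η / 2 ≤ |Y i ω - ∫ ω, Y i ω ∂P|
  linarith [abs_sub_le (Y i ω) (∫ ω, Y i ω ∂P) c]

lemma tendsto_iSup_of_forall_eventually_lt {b : ∀ n : ℕ, Fin n → ℝ} (hb : ∀ n i, 0 ≤ b n i)
    (h : ∀ η > 0, ∀ᶠ n in atTop, ∀ i, b n i < η) :
    Tendsto (fun n => ⨆ i, b n i) atTop (nhds 0) := by
  refine tendsto_order.2 ⟨fun η hη => Eventually.of_forall fun n =>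
    hη.trans_le (Real.iSup_nonneg (hb n)), fun η hη => ?_⟩
  filter_upwards [h (η / 2) (half_pos hη)] with n hn
  exact (Real.iSup_le (fun i => (hn i).le) (half_pos hη).le).trans_lt (half_lt_self hη)

section TriangularArray

variable {Ω : Type*} [MeasurableSpace Ω] {P : Measure Ω} [IsProbabilityMeasure P]
  {ε : ℕ → Ω → ℝ} {a : ∀ n : ℕ, Fin n → ℝ}

lemma tendsto_sum_integral_knightIntegral (hε : ∀ i, Measurable (ε i)) {F f f' : ℝ → ℝ}
    (hF : ∀ i t, P.real {ω | ε i ω ≤ t} = F t) {δ M : ℝ} (hδ : 0 < δ)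
    (hdens : ∀ x ∈ Set.Ioo (-δ) δ, HasDerivAt F (f x) x)
    (hf' : ∀ x ∈ Set.Ioo (-δ) δ, HasDerivAt f (f' x) x ∧ |f' x| ≤ M)
    (hsmall : ∀ η > 0, ∀ᶠ n in atTop, ∀ i, |a n i| < η) {Q : ℝ}
    (hQ : Tendsto (fun n => ∑ i, a n i ^ 2) atTop (nhds Q)) :
    Tendsto (fun n => ∑ i : Fin n, ∫ ω, knightIntegral (a n i) (ε i ω) ∂P) atTop
      (nhds (1 / 2 * f 0 * Q)) := by
  have hs := tendsto_iSup_of_forall_eventually_lt (fun n i => abs_nonneg (a n i)) hsmall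
  have hle : ∀ n i, |a n i| ≤ ⨆ j, |a n j| := fun n i =>
    le_ciSup (f := fun j => |a n j|) (Finite.bddAbove_range _) i
  have hM : 0 ≤ M := (abs_nonneg _).trans (hf' 0 ⟨by linarith, hδ⟩).2
  have herr : ∀ᶠ n in atTop, ‖∑ i : Fin n, ∫ ω, knightIntegral (a n i) (ε i ω) ∂P
      - 1 / 2 * f 0 * ∑ i, a n i ^ 2‖ ≤ M * (⨆ j, |a n j|) * ∑ i, a n i ^ 2 := by
    filter_upwards [hs.eventually (gt_mem_nhds hδ)] with n hn
    rw [Finset.mul_sum, Finset.mul_sum, ← Finset.sum_sub_distrib]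
    refine (norm_sum_le _ _).trans (Finset.sum_le_sum fun i _ => ?_)
    calc _ ≤ M * |a n i| ^ 3 := by
          rw [Real.norm_eq_abs, show 1 / 2 * f 0 * a n i ^ 2 = f 0 * a n i ^ 2 / 2 by ring]
          exact abs_integral_knightIntegral_sub_le P (hε i) (hF i) hdens hf'
            ((hle n i).trans_lt hn)
      _ = M * |a n i| * a n i ^ 2 := by rw [← sq_abs (a n i)]; ring
      _ ≤ M * (⨆ j, |a n j|) * a n i ^ 2 := by gcongr; exact hle n i
  have hbound : Tendsto (fun n => M * (⨆ j, |a n j|) * ∑ i, a n i ^ 2) atTop (nhds 0) := by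
    simpa using (hs.const_mul M).mul hQ
  simpa using (squeeze_zero_norm' herr hbound).add (hQ.const_mul (1 / 2 * f 0))

lemma tendsto_sum_variance_knightIntegral (hε : ∀ i, Measurable (ε i))
    (hsmall : ∀ η > 0, ∀ᶠ n in atTop, ∀ i, |a n i| < η) {L : ℝ}
    (hmean : Tendsto (fun n => ∑ i : Fin n, ∫ ω, knightIntegral (a n i) (ε i ω) ∂P) atTop
      (nhds L)) :
    Tendsto (fun n => ∑ i : Fin n, variance (fun ω => knightIntegral (a n i) (ε i ω)) P) atTop
      (nhds 0) := by
  have hs := tendsto_iSup_of_forall_eventually_lt (fun n i => abs_nonneg (a n i)) hsmall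
  refine squeeze_zero (fun (n : ℕ) => Finset.sum_nonneg fun i _ => variance_nonneg _ _)
    (fun n => ?_) (by simpa using hs.mul hmean)
  rw [Finset.mul_sum]
  refine Finset.sum_le_sum fun i _ => (variance_knightIntegral_le P (hε i) _).trans ?_
  gcongr
  · exact integral_nonneg fun ω => knightIntegral_nonneg _ _
  · exact le_ciSup (f := fun j => |a n j|) (Finite.bddAbove_range _) i

lemma tendstoInMeasure_sum_knightIntegral (hε : ∀ i, Measurable (ε i)) (hindep : iIndepFun ε P)
    (hsmall : ∀ η > 0, ∀ᶠ n in atTop, ∀ i, |a n i| < η) {L : ℝ}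
    (hmean : Tendsto (fun n => ∑ i : Fin n, ∫ ω, knightIntegral (a n i) (ε i ω) ∂P) atTop
      (nhds L)) :
    TendstoInMeasure P (fun n ω => ∑ i : Fin n, knightIntegral (a n i) (ε i ω)) atTop
      (fun _ => L) := by
  have hmem : ∀ n (i : Fin n), MemLp (fun ω => knightIntegral (a n i) (ε i ω)) 2 P :=
    fun n i => memLp_knightIntegral P (hε i) _ 2
  refine tendstoInMeasure_const_of_tendsto_variance
    (fun n => memLp_finsetSum _ fun i _ => hmem n i) ?_ ?_
  · exact hmean.congr fun n =>
      (integral_finsetSum _ fun (i : Fin n) _ => integrable_knightIntegral P (hε i) _).symm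
  · refine (tendsto_sum_variance_knightIntegral hε hsmall hmean).congr fun n => ?_
    rw [← Finset.sum_fn, IndepFun.variance_sum (fun i _ => hmem n i)]
    intro i _ j _ hij
    exact (hindep.indepFun (Fin.val_injective.ne hij)).comp (measurable_knightIntegral _)
      (measurable_knightIntegral _)

end TriangularArray

lemma inv_sqrt_mul_sq (n : ℕ) (x : ℝ) : ((Real.sqrt n)⁻¹ * x) ^ 2 = (n : ℝ)⁻¹ * x ^ 2 := by
  rw [mul_pow, inv_pow, Real.sq_sqrt n.cast_nonneg]

section Design

variable {r : ℕ} {X : ∀ n : ℕ, Fin n → Fin r → ℝ}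

lemma sum_sq_inv_sqrt_mul_sum_eq (n : ℕ) (u : Fin r → ℝ) :
    ∑ i, ((Real.sqrt n)⁻¹ * ∑ k, X n i k * u k) ^ 2
      = ∑ k, ∑ l, u k * ((n : ℝ)⁻¹ * ∑ i, X n i k * X n i l) * u l := by
  simp_rw [inv_sqrt_mul_sq, sq, Finset.sum_mul_sum, Finset.mul_sum, Finset.sum_mul]
  rw [Finset.sum_comm]
  refine Finset.sum_congr rfl fun k _ => ?_
  rw [Finset.sum_comm]
  exact Finset.sum_congr rfl fun l _ => Finset.sum_congr rfl fun i _ => by ring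

lemma tendsto_sum_sq_inv_sqrt_mul_sum {Υ : Matrix (Fin r) (Fin r) ℝ}
    (hΥ : ∀ k l, Tendsto (fun n : ℕ => (n : ℝ)⁻¹ * ∑ i, X n i k * X n i l) atTop (nhds (Υ k l)))
    (u : Fin r → ℝ) :
    Tendsto (fun n : ℕ => ∑ i, ((Real.sqrt n)⁻¹ * ∑ k, X n i k * u k) ^ 2) atTop
      (nhds (∑ k, ∑ l, u k * Υ k l * u l)) := by
  simp_rw [sum_sq_inv_sqrt_mul_sum_eq]
  exact tendsto_finsetSum _ fun k _ => tendsto_finsetSum _ fun l _ =>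
    ((hΥ k l).const_mul (u k)).mul_const (u l)

lemma eventually_abs_inv_sqrt_mul_sum_lt
    (hmax : ∀ η > (0 : ℝ), ∀ᶠ n : ℕ in atTop, ∀ i : Fin n, (n : ℝ)⁻¹ * ∑ k, (X n i k) ^ 2 < η)
    (u : Fin r → ℝ) :
    ∀ η > 0, ∀ᶠ n : ℕ in atTop, ∀ i, |(Real.sqrt n)⁻¹ * ∑ k, X n i k * u k| < η := by
  intro η hη
  set S := ∑ k, u k ^ 2
  have hS : 0 ≤ S := Finset.sum_nonneg fun k _ => sq_nonneg (u k)
  filter_upwards [hmax (η ^ 2 / (S + 1)) (by positivity)] with n hn i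
  refine abs_lt_of_sq_lt_sq ?_ hη.le
  calc ((Real.sqrt n)⁻¹ * ∑ k, X n i k * u k) ^ 2
      ≤ ((n : ℝ)⁻¹ * ∑ k, X n i k ^ 2) * S := by
        rw [inv_sqrt_mul_sq, mul_assoc]
        gcongr
        exact Finset.sum_mul_sq_le_sq_mul_sq _ _ _
    _ ≤ η ^ 2 / (S + 1) * S := by gcongr; exact (hn i).le
    _ < η ^ 2 := by
        rw [div_mul_eq_mul_div, div_lt_iff₀ (by positivity)]
        nlinarith [pow_pos hη 2]

end Design

theorem Bn_tendsto_in_probability_general {Ω : Type*} [MeasurableSpace Ω]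
    (P : Measure Ω) [IsProbabilityMeasure P]
    (ε : ℕ → Ω → ℝ) (hε : ∀ i, Measurable (ε i))
    (hindep : iIndepFun ε P)
    (F f : ℝ → ℝ) (hF : ∀ i t, (P {ω | ε i ω ≤ t}).toReal = F t)
    (δ : ℝ) (hδ : 0 < δ)
    (hdens : ∀ x ∈ Set.Ioo (-δ) δ, HasDerivAt F (f x) x)
    (f' : ℝ → ℝ) (M : ℝ)
    (hf' : ∀ x ∈ Set.Ioo (-δ) δ, HasDerivAt f (f' x) x ∧ |f' x| ≤ M)
    (r : ℕ) (X : ∀ n : ℕ, Fin n → Fin r → ℝ)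
    (hmax : ∀ η > (0 : ℝ), ∀ᶠ n : ℕ in atTop, ∀ i : Fin n,
      (n : ℝ)⁻¹ * ∑ k, (X n i k) ^ 2 < η)
    (Υ : Matrix (Fin r) (Fin r) ℝ)
    (hΥ : ∀ k l, Tendsto (fun n : ℕ => (n : ℝ)⁻¹ * ∑ i, X n i k * X n i l)
      atTop (nhds (Υ k l)))
    (u : Fin r → ℝ) :
    TendstoInMeasure P
      (fun (n : ℕ) (ω : Ω) => ∑ i : Fin n,
        ∫ v in (0 : ℝ)..((Real.sqrt n)⁻¹ * ∑ k, X n i k * u k),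
          ((if ε i ω < v then (1 : ℝ) else 0) - (if ε i ω < 0 then 1 else 0)))
      atTop
      (fun _ => (1 / 2) * f 0 * ∑ k, ∑ l, u k * Υ k l * u l) := by
  have hsmall := eventually_abs_inv_sqrt_mul_sum_lt hmax u
  exact tendstoInMeasure_sum_knightIntegral hε hindep hsmall
    (tendsto_sum_integral_knightIntegral hε hF hδ hdens hf' hsmall
      (tendsto_sum_sq_inv_sqrt_mul_sum hΥ u))

/-- Convergence in probability of the quadratic remainder term `B_n(u)`: for i.i.d. errors with
distribution function `F` differentiable near `0` with continuous density `f` having bounded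
derivative near `0`, and a triangular design with `n^{-1} max_i ‖𝕏_i‖² → 0` and
`n^{-1} Σ_i 𝕏_i 𝕏_iᵗ → Υ` positive definite,
`B_n(u) = Σ_i ∫_0^{n^{-1/2}𝕏_iᵗu} (1_{ε_i < v} − 1_{ε_i < 0}) dv` converges in probability to
`(1/2) f(0) uᵗΥu`. -/
theorem Bn_tendsto_in_probability {Ω : Type*} [MeasurableSpace Ω]
    (P : Measure Ω) [IsProbabilityMeasure P]
    (ε : ℕ → Ω → ℝ) (hε : ∀ i, Measurable (ε i))
    (hindep : iIndepFun ε P)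
    (hident : ∀ i, IdentDistrib (ε i) (ε 0) P P)
    (F f : ℝ → ℝ) (hF : ∀ i t, (P {ω | ε i ω ≤ t}).toReal = F t)
    (δ : ℝ) (hδ : 0 < δ)
    (hdens : ∀ x ∈ Set.Ioo (-δ) δ, HasDerivAt F (f x) x)
    (hfcont : ContinuousOn f (Set.Ioo (-δ) δ))
    (f' : ℝ → ℝ) (M : ℝ)
    (hf' : ∀ x ∈ Set.Ioo (-δ) δ, HasDerivAt f (f' x) x ∧ |f' x| ≤ M)
    (r : ℕ) (X : ∀ n : ℕ, Fin n → Fin r → ℝ)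
    (hmax : ∀ η > (0 : ℝ), ∀ᶠ n : ℕ in atTop, ∀ i : Fin n,
      (n : ℝ)⁻¹ * ∑ k, (X n i k) ^ 2 < η)
    (Υ : Matrix (Fin r) (Fin r) ℝ) (hΥpos : Υ.PosDef)
    (hΥ : ∀ k l, Tendsto (fun n : ℕ => (n : ℝ)⁻¹ * ∑ i, X n i k * X n i l)
      atTop (nhds (Υ k l)))
    (u : Fin r → ℝ) :
    TendstoInMeasure P
      (fun (n : ℕ) (ω : Ω) => ∑ i : Fin n,
        ∫ v in (0 : ℝ)..((Real.sqrt n)⁻¹ * ∑ k, X n i k * u k),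
          ((if ε i ω < v then (1 : ℝ) else 0) - (if ε i ω < 0 then 1 else 0)))
      atTop
      (fun _ => (1 / 2) * f 0 * ∑ k, ∑ l, u k * Υ k l * u l) :=
  Bn_tendsto_in_probability_general P ε hε hindep F f hF δ hδ hdens f' M hf' r X hmax Υ hΥ u
end
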